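/- arXiv:math/0306335 — 2 statements merged into one kernel-verified Lean document; each statement's English description precedes it below -/
import Mathlib

section
/- Fix 0 < c₁ < c₀ < 1. There exists β₀ > 0 such that for all β ∈ (0, β₀) and all ε with ε² ≤ c₁β: (i) Re λ₁±(k + iβ) ≤ -1 + c₀(1-β) + β² < 0 for all k ∈ ℝ, and (ii) Re λ₂(k + iβ) ≤ ε² - c₀β + 4β²(1 + 2β²) < 0 for all k ∈ ℝ, where λ₁±(z) = -z² - (1 ∓ c₀) + c₀ i z and λ₂(z) = -(1 - z²)² + ε² + c₀ i z. -/
/-- Spectral stabilization in exponentially weighted spaces: for `0 < c₁ < c₀ < 1` there is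
`β₀ > 0` such that for `β ∈ (0, β₀)` and `ε² ≤ c₁ β` the shifted dispersion curves satisfy the
stated negative upper bounds. -/
theorem stmt3 (c₀ c₁ : ℝ) (hc₁0 : 0 < c₁) (hc : c₁ < c₀) (hc₀ : c₀ < 1) :
    ∃ β₀ > 0, ∀ β : ℝ, 0 < β → β < β₀ → ∀ ε : ℝ, ε ^ 2 ≤ c₁ * β →
      (∀ k : ℝ,
        (-((k : ℂ) + (β : ℂ) * Complex.I) ^ 2 - (1 - (c₀ : ℂ))
          + (c₀ : ℂ) * Complex.I * ((k : ℂ) + (β : ℂ) * Complex.I)).re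
            ≤ -1 + c₀ * (1 - β) + β ^ 2) ∧
      (∀ k : ℝ,
        (-((k : ℂ) + (β : ℂ) * Complex.I) ^ 2 - (1 + (c₀ : ℂ))
          + (c₀ : ℂ) * Complex.I * ((k : ℂ) + (β : ℂ) * Complex.I)).re
            ≤ -1 + c₀ * (1 - β) + β ^ 2) ∧
      (-1 + c₀ * (1 - β) + β ^ 2 < 0) ∧
      (∀ k : ℝ,
        (-(1 - ((k : ℂ) + (β : ℂ) * Complex.I) ^ 2) ^ 2 + (ε : ℂ) ^ 2
          + (c₀ : ℂ) * Complex.I * ((k : ℂ) + (β : ℂ) * Complex.I)).re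
            ≤ ε ^ 2 - c₀ * β + 4 * β ^ 2 * (1 + 2 * β ^ 2)) ∧
      (ε ^ 2 - c₀ * β + 4 * β ^ 2 * (1 + 2 * β ^ 2) < 0) := by
  refine ⟨min ((1 - c₀)/2) ((c₀ - c₁)/12), lt_min (by linarith) (by linarith), ?_⟩
  intro β hβ hβ₀ ε hε
  have h1 : β < (1 - c₀)/2 := lt_of_lt_of_le hβ₀ (min_le_left _ _)
  have h2 : β < (c₀ - c₁)/12 := lt_of_lt_of_le hβ₀ (min_le_right _ _)
  have hβ1 : β < 1 := by nlinarith
  refine ⟨?_, ?_, ?_, ?_, ?_⟩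
  · intro k
    simp only [Complex.add_re, Complex.sub_re, Complex.neg_re, Complex.mul_re, Complex.mul_im,
      Complex.ofReal_re, Complex.ofReal_im, Complex.I_re, Complex.I_im, Complex.one_re,
      Complex.one_im, pow_two, Complex.add_im, Complex.neg_im, Complex.sub_im]
    nlinarith [sq_nonneg k]
  · intro k
    simp only [Complex.add_re, Complex.sub_re, Complex.neg_re, Complex.mul_re, Complex.mul_im,
      Complex.ofReal_re, Complex.ofReal_im, Complex.I_re, Complex.I_im, Complex.one_re,
      Complex.one_im, pow_two, Complex.add_im, Complex.neg_im, Complex.sub_im]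
    nlinarith [sq_nonneg k, hc₁0.trans hc, hβ.le]
  · nlinarith [hβ.le, (hc₁0.trans hc).le]
  · intro k
    simp only [Complex.add_re, Complex.sub_re, Complex.neg_re, Complex.mul_re, Complex.mul_im,
      Complex.ofReal_re, Complex.ofReal_im, Complex.I_re, Complex.I_im, Complex.one_re,
      Complex.one_im, pow_two, Complex.add_im, Complex.neg_im, Complex.sub_im]
    nlinarith [sq_nonneg (1 - k^2 + 3*β^2)]
  · have hβ2 : β^2 ≤ β := by nlinarith
    have h3 : 12 * β^2 < (c₀ - c₁) * β := by nlinarith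
    nlinarith [sq_nonneg β, sq_nonneg (β^2)]
end

section
/- Let h(y) = tanh(y/2), 0 < c₀ < 1, γ > 0, α < 0, and suppose v̂ ∈ H⁴(ℝ) satisfies -(1+∂_y²)²v̂ + c₀∂_y v̂ + αv̂ - γ(1-h²)v̂ = λv̂ for some λ ∈ ℂ with Re λ > α. Then v̂ = 0. -/
/-!
Pair the equation with `v̂` in `L²(ℝ)`. After integrating by parts, the transport term `c₀ ∂v̂`
contributes a purely imaginary number, and the fourth-order term becomes `‖(1 + ∂²) v̂‖²`: write
`(1 + ∂²)² v̂ = w + w''` with `w = (1 + ∂²) v̂` and move `∂²` from `w` onto `v̂`. As the potential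
`γ (1 - h²)` is nonnegative, taking real parts gives
`(Re λ - α) ‖v̂‖² = -‖(1 + ∂²) v̂‖² - ∫ γ (1 - h²) |v̂|² ≤ 0`.
-/

open MeasureTheory ComplexConjugate

section L2Pairing

variable {α : Type*} [MeasurableSpace α] {μ : Measure α}

lemma MeasureTheory.MemLp.integrable_mul_conj {f g : α → ℂ} (hf : MemLp f 2 μ)
    (hg : MemLp g 2 μ) : Integrable (fun x => f x * conj (g x)) μ :=
  hf.integrable_mul hg.star

lemma integral_mul_conj_self (f : α → ℂ) :
    ∫ x, f x * conj (f x) ∂μ = ((∫ x, ‖f x‖ ^ 2 ∂μ : ℝ) : ℂ) := by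
  simp_rw [Complex.mul_conj', ← Complex.ofReal_pow]
  exact integral_ofReal

lemma integral_ofReal_mul_mul_conj_self (W : α → ℝ) (f : α → ℂ) :
    ∫ x, (W x : ℂ) * f x * conj (f x) ∂μ = ((∫ x, W x * ‖f x‖ ^ 2 ∂μ : ℝ) : ℂ) := by
  simp_rw [mul_assoc, Complex.mul_conj', ← Complex.ofReal_pow, ← Complex.ofReal_mul]
  exact integral_ofReal

lemma eq_zero_of_integral_norm_sq_eq_zero [TopologicalSpace α] [μ.IsOpenPosMeasure]
    {f : α → ℂ} (hcont : Continuous f) (hf : MemLp f 2 μ) (h : ∫ x, ‖f x‖ ^ 2 ∂μ = 0) :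
    f = 0 := by
  have hae : (fun x => ‖f x‖ ^ 2) =ᵐ[μ] 0 :=
    (integral_eq_zero_iff_of_nonneg (fun x => by positivity)
      (hf.integrable_norm_pow two_ne_zero)).mp h
  funext x
  simpa using congrFun ((Continuous.ae_eq_iff_eq μ (by fun_prop) continuous_zero).mp hae) x

end L2Pairing

section IntegrationByParts

variable {f f' f'' g g' g'' : ℝ → ℂ}

lemma integral_deriv_mul_conj (hf : ∀ x, HasDerivAt f (f' x) x) (hg : ∀ x, HasDerivAt g (g' x) x)
    (hf₂ : MemLp f 2 volume) (hf'₂ : MemLp f' 2 volume) (hg₂ : MemLp g 2 volume)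
    (hg'₂ : MemLp g' 2 volume) :
    ∫ x, f' x * conj (g x) = -∫ x, f x * conj (g' x) := by
  have h := integral_mul_deriv_eq_deriv_mul_of_integrable (u := f) (v := fun x => conj (g x))
    (fun x _ => hf x) (fun x _ => (hg x).star) (hf₂.integrable_mul_conj hg'₂)
    (hf'₂.integrable_mul_conj hg₂) (hf₂.integrable_mul_conj hg₂)
  exact neg_eq_iff_eq_neg.mp h.symm

lemma integral_deriv_deriv_mul_conj (hf : ∀ x, HasDerivAt f (f' x) x)
    (hf' : ∀ x, HasDerivAt f' (f'' x) x) (hg : ∀ x, HasDerivAt g (g' x) x)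
    (hg' : ∀ x, HasDerivAt g' (g'' x) x) (hf₂ : MemLp f 2 volume) (hf'₂ : MemLp f' 2 volume)
    (hf''₂ : MemLp f'' 2 volume) (hg₂ : MemLp g 2 volume) (hg'₂ : MemLp g' 2 volume)
    (hg''₂ : MemLp g'' 2 volume) :
    ∫ x, f'' x * conj (g x) = ∫ x, f x * conj (g'' x) := by
  rw [integral_deriv_mul_conj hf' hg hf'₂ hf''₂ hg₂ hg'₂,
    integral_deriv_mul_conj hf hg' hf₂ hf'₂ hg'₂ hg''₂, neg_neg]

lemma re_integral_deriv_mul_conj_self (hf : ∀ x, HasDerivAt f (f' x) x)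
    (hf₂ : MemLp f 2 volume) (hf'₂ : MemLp f' 2 volume) :
    (∫ x, f' x * conj (f x)).re = 0 := by
  have h := integral_deriv_mul_conj hf hf hf₂ hf'₂ hf₂ hf'₂
  rw [show ∫ x, f x * conj (f' x) = conj (∫ x, f' x * conj (f x)) by
    rw [← integral_conj]; simp [mul_comm]] at h
  have := congrArg Complex.re h
  simp only [Complex.conj_re, Complex.neg_re] at this
  linarith

end IntegrationByParts

lemma hasDerivAt_iteratedDeriv {F : Type*} [NormedAddCommGroup F] [NormedSpace ℝ F] {n : ℕ}
    {v : ℝ → F} (hv : ContDiff ℝ n v) {j : ℕ} (hj : j < n)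
    (x : ℝ) : HasDerivAt (iteratedDeriv j v) (iteratedDeriv (j + 1) v x) x := by
  rw [iteratedDeriv_succ]
  exact (hv.differentiable_iteratedDeriv j (by exact_mod_cast hj) x).hasDerivAt

section SwiftHohenberg

variable {v : ℝ → ℂ}

lemma integral_swiftHohenberg_mul_conj (hv : ContDiff ℝ 4 v)
    (hL2 : ∀ j : ℕ, j ≤ 4 → MemLp (iteratedDeriv j v) 2 volume) :
    ∫ y, (v y + 2 * iteratedDeriv 2 v y + iteratedDeriv 4 v y) * conj (v y)
      = ((∫ y, ‖v y + iteratedDeriv 2 v y‖ ^ 2 : ℝ) : ℂ) := by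
  have hD (j : ℕ) (hj : j < 4) := hasDerivAt_iteratedDeriv hv (by exact_mod_cast hj)
  have hv' : ∀ x, HasDerivAt v (iteratedDeriv 1 v x) x := by simpa using hD 0 (by norm_num)
  have m0 : MemLp v 2 volume := by simpa using hL2 0 (by norm_num)
  set w := fun y => v y + iteratedDeriv 2 v y
  have hw x : HasDerivAt w (iteratedDeriv 1 v x + iteratedDeriv 3 v x) x :=
    (hv' x).add (hD 2 (by norm_num) x)
  have hw' x : HasDerivAt (fun y => iteratedDeriv 1 v y + iteratedDeriv 3 v y)
      (iteratedDeriv 2 v x + iteratedDeriv 4 v x) x :=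
    (hD 1 (by norm_num) x).add (hD 3 (by norm_num) x)
  have mw : MemLp w 2 volume := m0.add (hL2 2 (by norm_num))
  have mw' : MemLp (fun y => iteratedDeriv 1 v y + iteratedDeriv 3 v y) 2 volume :=
    (hL2 1 (by norm_num)).add (hL2 3 (by norm_num))
  have mw'' : MemLp (fun y => iteratedDeriv 2 v y + iteratedDeriv 4 v y) 2 volume :=
    (hL2 2 (by norm_num)).add (hL2 4 (by norm_num))
  calc ∫ y, (v y + 2 * iteratedDeriv 2 v y + iteratedDeriv 4 v y) * conj (v y)
      = ∫ y, (w y * conj (v y)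
          + (iteratedDeriv 2 v y + iteratedDeriv 4 v y) * conj (v y)) := by
        congr 1; funext y; ring
    _ = (∫ y, w y * conj (v y))
          + ∫ y, (iteratedDeriv 2 v y + iteratedDeriv 4 v y) * conj (v y) :=
        integral_add (mw.integrable_mul_conj m0)
          (mw''.integrable_mul_conj m0)
    _ = (∫ y, w y * conj (v y)) + ∫ y, w y * conj (iteratedDeriv 2 v y) := by
        rw [integral_deriv_deriv_mul_conj hw hw' hv' (hD 1 (by norm_num))
          mw mw' mw'' m0 (hL2 1 (by norm_num)) (hL2 2 (by norm_num))]
    _ = ∫ y, (w y * conj (v y) + w y * conj (iteratedDeriv 2 v y)) :=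
        (integral_add (mw.integrable_mul_conj m0)
          (mw.integrable_mul_conj (hL2 2 (by norm_num)))).symm
    _ = ∫ y, w y * conj (w y) := by
        congr 1; funext y; simp only [w, map_add]; ring
    _ = _ := integral_mul_conj_self w

theorem eq_zero_of_swiftHohenberg_eigen {c α : ℝ} {W : ℝ → ℝ} (hW : ∀ y, 0 ≤ W y)
    (hv : ContDiff ℝ 4 v) (hL2 : ∀ j : ℕ, j ≤ 4 → MemLp (iteratedDeriv j v) 2 volume)
    {lam : ℂ} (hlam : α < lam.re)
    (heq : ∀ y, -(v y + 2 * iteratedDeriv 2 v y + iteratedDeriv 4 v y) + (c : ℂ) * deriv v y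
      + (α : ℂ) * v y - (W y : ℂ) * v y = lam * v y) :
    v = 0 := by
  have m0 : MemLp v 2 volume := by simpa using hL2 0 (by norm_num)
  have m1 : MemLp (deriv v) 2 volume := by simpa using hL2 1 (by norm_num)
  have mS : MemLp (fun y => v y + 2 * iteratedDeriv 2 v y + iteratedDeriv 4 v y) 2 volume :=
    (m0.add ((hL2 2 (by norm_num)).const_mul 2)).add (hL2 4 (by norm_num))
  have hv' x : HasDerivAt v (deriv v x) x := (hv.differentiable (by norm_num) x).hasDerivAt
  have hpair : ((∫ y, W y * ‖v y‖ ^ 2 : ℝ) : ℂ)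
      = -((∫ y, ‖v y + iteratedDeriv 2 v y‖ ^ 2 : ℝ) : ℂ) + c * (∫ y, deriv v y * conj (v y))
        + (α - lam) * ((∫ y, ‖v y‖ ^ 2 : ℝ) : ℂ) := by
    have iS := mS.integrable_mul_conj m0
    have i1 := m1.integrable_mul_conj m0
    have i0 := m0.integrable_mul_conj m0
    calc ((∫ y, W y * ‖v y‖ ^ 2 : ℝ) : ℂ)
        = ∫ y, (W y : ℂ) * v y * conj (v y) := (integral_ofReal_mul_mul_conj_self W v).symm
      _ = ∫ y, (-((v y + 2 * iteratedDeriv 2 v y + iteratedDeriv 4 v y) * conj (v y))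
            + c * (deriv v y * conj (v y)) + (α - lam) * (v y * conj (v y))) := by
          congr 1; funext y; linear_combination (-conj (v y)) * heq y
      _ = -(∫ y, (v y + 2 * iteratedDeriv 2 v y + iteratedDeriv 4 v y) * conj (v y))
            + c * (∫ y, deriv v y * conj (v y)) + (α - lam) * (∫ y, v y * conj (v y)) := by
          rw [integral_add _ (i0.const_mul _), integral_add _ (i1.const_mul _),
            integral_neg, integral_const_mul, integral_const_mul]
          · exact iS.neg
          · exact iS.neg.add (i1.const_mul _)
      _ = _ := by rw [integral_swiftHohenberg_mul_conj hv hL2, integral_mul_conj_self]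
  have hre := congrArg Complex.re hpair
  simp only [Complex.add_re, Complex.neg_re, Complex.mul_re, Complex.sub_re, Complex.sub_im,
    Complex.ofReal_re, Complex.ofReal_im, re_integral_deriv_mul_conj_self hv' m0 m1, mul_zero,
    zero_mul, sub_self, add_zero, zero_sub, sub_zero] at hre
  have hW2 : 0 ≤ ∫ y, W y * ‖v y‖ ^ 2 := integral_nonneg fun y => by have := hW y; positivity
  have hS : 0 ≤ ∫ y, ‖v y + iteratedDeriv 2 v y‖ ^ 2 := integral_nonneg fun y => by positivity
  have hN : 0 ≤ ∫ y, ‖v y‖ ^ 2 := integral_nonneg fun y => by positivity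
  have hneg : (lam.re - α) * ∫ y, ‖v y‖ ^ 2 ≤ 0 := by linarith
  refine eq_zero_of_integral_norm_sq_eq_zero hv.continuous m0 ?_
  nlinarith

end SwiftHohenberg

theorem stmt6_general (c₀ γ α : ℝ) (hγ : 0 < γ)
    (v : ℝ → ℂ) (hv : ContDiff ℝ 4 v)
    (hL2 : ∀ j : ℕ, j ≤ 4 → MemLp (iteratedDeriv j v) 2 volume)
    (lam : ℂ) (hlam : α < lam.re)
    (heq : ∀ y : ℝ,
      -(v y + 2 * iteratedDeriv 2 v y + iteratedDeriv 4 v y)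
        + (c₀ : ℂ) * deriv v y + (α : ℂ) * v y
        - (γ : ℂ) * (1 - (Real.tanh (y / 2) : ℂ) ^ 2) * v y = lam * v y) :
    v = 0 := by
  have hW y : 0 ≤ γ * (1 - Real.tanh (y / 2) ^ 2) :=
    mul_nonneg hγ.le (sub_nonneg.mpr (Real.tanh_sq_lt_one _).le)
  refine eq_zero_of_swiftHohenberg_eigen (c := c₀) hW hv hL2 hlam fun y => ?_
  simpa only [Complex.ofReal_mul, Complex.ofReal_sub, Complex.ofReal_one, Complex.ofReal_pow]
    using heq y

/-- If `v̂ ∈ H⁴(ℝ)` solves the weighted Swift–Hohenberg eigenvalue equation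
`-(1+∂²)²v̂ + c₀∂v̂ + αv̂ - γ(1-h²)v̂ = λ v̂` with `Re λ > α` (and `α < 0`, `γ > 0`),
then `v̂ = 0`. -/
theorem stmt6 (c₀ γ α : ℝ) (hc₀ : 0 < c₀) (hc₁ : c₀ < 1) (hγ : 0 < γ) (hα : α < 0)
    (v : ℝ → ℂ) (hv : ContDiff ℝ 4 v)
    (hL2 : ∀ j : ℕ, j ≤ 4 → MemLp (iteratedDeriv j v) 2 volume)
    (lam : ℂ) (hlam : α < lam.re)
    (heq : ∀ y : ℝ,
      -(v y + 2 * iteratedDeriv 2 v y + iteratedDeriv 4 v y)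
        + (c₀ : ℂ) * deriv v y + (α : ℂ) * v y
        - (γ : ℂ) * (1 - (Real.tanh (y / 2) : ℂ) ^ 2) * v y = lam * v y) :
    v = 0 :=
  stmt6_general c₀ γ α hγ v hv hL2 lam hlam heq
end
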